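/- The formula φ₁ = (x ≠ 1 ∧ y ≠ 1) is an invariant of the event structure for the program (y=x; || x=y;): for every configuration C, if the read labels of C satisfy φ₁ then all labels of C satisfy φ₁. -/
import Mathlib


/-- Locations. -/
inductive Lc where | x | y
deriving DecidableEq

/-- Memory actions over locations `Lc` and natural-number values. -/
inductive Act where
  | init : Act
  | read (l : Lc) (v : ℕ) : Act
  | write (l : Lc) (v : ℕ) : Act
deriving DecidableEq

/-- Events of the event structure for `(y=x; || x=y;)`. -/
inductive Ev where
  | einit | rx0 | rx1 | wy0 | wy1 | ry0 | ry1 | wx0 | wx1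
deriving DecidableEq

open Ev Act Lc

/-- Labelling of events. -/
def lab : Ev → Act
  | einit => .init
  | rx0 => .read .x 0
  | rx1 => .read .x 1
  | wy0 => .write .y 0
  | wy1 => .write .y 1
  | ry0 => .read .y 0
  | ry1 => .read .y 1
  | wx0 => .write .x 0
  | wx1 => .write .x 1

/-- Immediate program order: init < Rx0 < Wy0, init < Rx1 < Wy1,
init < Ry0 < Wx0, init < Ry1 < Wx1. -/
def po : Ev → Ev → Prop := fun d e =>
  (d = einit ∧ (e = rx0 ∨ e = rx1 ∨ e = ry0 ∨ e = ry1)) ∨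
  (d = rx0 ∧ e = wy0) ∨ (d = rx1 ∧ e = wy1) ∨
  (d = ry0 ∧ e = wx0) ∨ (d = ry1 ∧ e = wx1)

/-- Conflict: Rx0 # Rx1 and Ry0 # Ry1, inherited by program-order successors. -/
def confl : Ev → Ev → Prop := fun d e =>
  (d ∈ ({rx0, wy0} : Set Ev) ∧ e ∈ ({rx1, wy1} : Set Ev)) ∨
  (d ∈ ({rx1, wy1} : Set Ev) ∧ e ∈ ({rx0, wy0} : Set Ev)) ∨
  (d ∈ ({ry0, wx0} : Set Ev) ∧ e ∈ ({ry1, wx1} : Set Ev)) ∨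
  (d ∈ ({ry1, wx1} : Set Ev) ∧ e ∈ ({ry0, wx0} : Set Ev))

/-- A configuration: a finite, downward-closed, conflict-free set of events. -/
def IsConfig (C : Set Ev) : Prop :=
  C.Finite ∧ (∀ e ∈ C, ∀ d, po d e → d ∈ C) ∧ (∀ d ∈ C, ∀ e ∈ C, ¬ confl d e)

/-- The set of read labels. -/
def Reads : Set Act := {a | ∃ z v, a = Act.read z v}

/-- `A ⊨ (z ≠ v)`: no read/write label on location `z` in `A` has value `v`. -/
def SatNeq (A : Set Act) (z : Lc) (v : ℕ) : Prop :=
  ∀ a ∈ A, ∀ w : ℕ, (a = Act.read z w ∨ a = Act.write z w) → w ≠ v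

/-- `φ₁ = (x ≠ 1 ∧ y ≠ 1)` is an invariant of the event structure for
`(y=x; || x=y;)`: for every configuration `C`, if the read labels of `C`
satisfy `φ₁` then all labels of `C` do. -/
theorem stmt8 (C : Set Ev) (hC : IsConfig C)
    (hr : SatNeq (lab '' C ∩ Reads) Lc.x 1 ∧ SatNeq (lab '' C ∩ Reads) Lc.y 1) :
    SatNeq (lab '' C) Lc.x 1 ∧ SatNeq (lab '' C) Lc.y 1 := by
  obtain ⟨hfin, hdc, hcf⟩ := hC
  have hrx1 : rx1 ∉ C := fun h =>
    hr.1 (.read .x 1) ⟨⟨rx1, h, rfl⟩, ⟨_, _, rfl⟩⟩ 1 (Or.inl rfl) rfl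
  have hry1 : ry1 ∉ C := fun h =>
    hr.2 (.read .y 1) ⟨⟨ry1, h, rfl⟩, ⟨_, _, rfl⟩⟩ 1 (Or.inl rfl) rfl
  have hwy1 : wy1 ∉ C := fun h => hrx1 (hdc _ h _ (by simp [po]))
  have hwx1 : wx1 ∉ C := fun h => hry1 (hdc _ h _ (by simp [po]))
  constructor <;>
  · rintro a ⟨e, he, rfl⟩ w hw rfl
    cases e <;> simp [lab] at hw <;>
      first
        | omega
        | exact hrx1 he
        | exact hry1 he
        | exact hwy1 he
        | exact hwx1 he
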